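/- For real y, |p(iy)| = (1+y²)^{1/4} + (1+y²)^{−1/4}, where p(z) = (1+z)^{−1/2} + (1−z)^{1/2} with principal square roots; consequently |p(iy)| is a monotonically increasing function of |y| and attains its minimum value 2 at y = 0. -/

import Mathlib

open Complex

noncomputable def pSOR (z : ℂ) : ℂ := (1 + z) ^ (-(1 / 2) : ℂ) + (1 - z) ^ ((1 : ℂ) / 2)

lemma pSOR_abs (y : ℝ) : ‖pSOR ((y : ℂ) * Complex.I)‖
    = (1 + y ^ 2) ^ ((1 : ℝ) / 4) + (1 + y ^ 2) ^ (-(1 : ℝ) / 4) := by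
  set w : ℂ := 1 + (y : ℂ) * Complex.I with hw
  have hwre : w.re = 1 := by simp [hw]
  have hw0 : w ≠ 0 := by
    intro h; rw [h] at hwre; simp at hwre
  have harg : w.arg ≠ Real.pi := by
    intro h
    rw [Complex.arg_eq_pi_iff] at h
    rw [hwre] at h
    linarith [h.1]
  have hconj : (1 : ℂ) - (y : ℂ) * Complex.I = (starRingEnd ℂ) w := by
    simp [hw, Complex.conj_I]
    ring
  have hhalf : (starRingEnd ℂ) ((1 : ℂ)/2) = (1 : ℂ)/2 := by
    have := Complex.conj_ofReal (1/2 : ℝ)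
    push_cast at this
    simpa using this
  have hkey : pSOR ((y : ℂ) * Complex.I)
      = (w ^ ((1:ℂ)/2))⁻¹ + (starRingEnd ℂ) (w ^ ((1:ℂ)/2)) := by
    rw [pSOR, hconj, Complex.conj_cpow _ _ harg, hhalf]
    rw [show (-(1/2) : ℂ) = -(1/2 : ℂ) by norm_num, Complex.cpow_neg]
  set s : ℂ := w ^ ((1:ℂ)/2) with hs
  have hs0 : s ≠ 0 := by
    rw [hs]
    intro h
    rcases (Complex.cpow_eq_zero_iff w ((1:ℂ)/2)).mp h with ⟨h1, _⟩
    exact hw0 h1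
  have hsplit : s⁻¹ + (starRingEnd ℂ) s = s⁻¹ * (1 + (Complex.normSq s : ℂ)) := by
    rw [Complex.normSq_eq_conj_mul_self]
    field_simp
  have hA : ‖s‖ = (1 + y ^ 2) ^ ((1:ℝ)/4) := by
    have h1 : ‖s‖ = ‖w‖ ^ ((1:ℝ)/2) := by
      rw [hs, show ((1:ℂ)/2) = ((1/2 : ℝ) : ℂ) by norm_num, Complex.norm_cpow_real]
    have h2 : ‖w‖ = Real.sqrt (1 + y ^ 2) := by
      rw [hw]
      rw [show (1 : ℂ) + (y:ℂ) * Complex.I = ((1:ℝ):ℂ) + (y:ℂ) * Complex.I by norm_num]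
      rw [Complex.norm_add_mul_I]
      ring_nf
    rw [h1, h2, Real.sqrt_eq_rpow, ← Real.rpow_mul (by positivity)]
    norm_num
  have hApos : 0 < ‖s‖ := norm_pos_iff.mpr hs0
  rw [hkey, hsplit, norm_mul, norm_inv]
  have hnsq : ‖(1 + (Complex.normSq s : ℂ))‖ = 1 + ‖s‖ ^ 2 := by
    rw [show (1 : ℂ) + (Complex.normSq s : ℂ) = ((1 + Complex.normSq s : ℝ) : ℂ) by push_cast; ring]
    rw [Complex.norm_real, Real.norm_eq_abs, abs_of_pos (by have := Complex.normSq_nonneg s; linarith), Complex.normSq_eq_norm_sq]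
  rw [hnsq, hA]
  have hpos : (0:ℝ) < (1 + y ^ 2) ^ ((1:ℝ)/4) := by positivity
  rw [show (-(1:ℝ)/4) = -((1:ℝ)/4) by ring, Real.rpow_neg (by positivity)]
  field_simp
  ring

lemma xinv_mono {a b : ℝ} (ha : 1 ≤ a) (hab : a ≤ b) : a + a⁻¹ ≤ b + b⁻¹ := by
  have ha0 : 0 < a := by linarith
  have hb0 : 0 < b := by linarith
  rw [← sub_nonneg]
  have heq : b + b⁻¹ - (a + a⁻¹) = (b - a) * (1 - (a*b)⁻¹) := by
    field_simp; ring
  rw [heq]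
  have : (a*b)⁻¹ ≤ 1 := by
    rw [inv_le_one_iff₀]; right; nlinarith
  nlinarith

theorem stmt2 :
    (∀ y : ℝ, ‖pSOR ((y : ℂ) * Complex.I)‖
        = (1 + y ^ 2) ^ ((1 : ℝ) / 4) + (1 + y ^ 2) ^ (-(1 : ℝ) / 4)) ∧
    (∀ y₁ y₂ : ℝ, |y₁| ≤ |y₂| →
        ‖pSOR ((y₁ : ℂ) * Complex.I)‖ ≤ ‖pSOR ((y₂ : ℂ) * Complex.I)‖) ∧
    (‖pSOR ((0 : ℂ) * Complex.I)‖ = 2) ∧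
    (∀ y : ℝ, 2 ≤ ‖pSOR ((y : ℂ) * Complex.I)‖) := by
  have hz : ‖pSOR ((0 : ℂ) * Complex.I)‖ = 2 := by
    have := pSOR_abs 0
    norm_num at this
    rw [zero_mul]
    exact this
  refine ⟨pSOR_abs, ?_, hz, ?_⟩
  · intro y₁ y₂ h
    rw [pSOR_abs, pSOR_abs]
    have h2 : 1 + y₁ ^ 2 ≤ 1 + y₂ ^ 2 := by nlinarith [_root_.sq_abs y₁, _root_.sq_abs y₂, abs_nonneg y₁]
    have ha : (1:ℝ) ≤ (1 + y₁ ^ 2) ^ ((1:ℝ)/4) :=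
      Real.one_le_rpow (by nlinarith) (by norm_num)
    have hb : (1 + y₁ ^ 2) ^ ((1:ℝ)/4) ≤ (1 + y₂ ^ 2) ^ ((1:ℝ)/4) :=
      Real.rpow_le_rpow (by positivity) h2 (by norm_num)
    have := xinv_mono ha hb
    rw [show (-(1:ℝ)/4) = -((1:ℝ)/4) by ring, Real.rpow_neg (by positivity),
      Real.rpow_neg (by positivity)]
    exact this
  · intro y
    rw [pSOR_abs]
    have ha : (1:ℝ) ≤ (1 + y ^ 2) ^ ((1:ℝ)/4) := Real.one_le_rpow (by nlinarith) (by norm_num)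
    rw [show (-(1:ℝ)/4) = -((1:ℝ)/4) by ring, Real.rpow_neg (by positivity)]
    set A := (1 + y ^ 2) ^ ((1:ℝ)/4)
    have hA0 : 0 < A := by linarith
    have : (A - 1)^2 ≥ 0 := sq_nonneg _
    rw [← sub_nonneg]
    have heq : A + A⁻¹ - 2 = (A-1)^2 / A := by field_simp; ring
    rw [heq]
    positivity
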